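/- Let C ⊆ ℕ, let H be a C-2-hyperimmune bifamily, and let G ⊆ ℕ be a set of C-hyperimmune-free degree, i.e., every function f : ℕ → ℕ Turing reducible to C ⊕ G is dominated by some C-computable function. Then H is (C ⊕ G)-2-hyperimmune. -/

import Mathlib

namespace Paper

/-- `RecIn O f` : the partial function `f` is partial recursive relative to the oracle `O`.
This is the inductive definition of oracle computability, mirroring `Nat.Partrec`
with an extra constructor for the oracle. -/
inductive RecIn (O : ℕ →. ℕ) : (ℕ →. ℕ) → Prop
  | oracle : RecIn O O
  | zero : RecIn O (pure 0)
  | succ : RecIn O Nat.succ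
  | left : RecIn O ↑fun n : ℕ => n.unpair.1
  | right : RecIn O ↑fun n : ℕ => n.unpair.2
  | pair {f g} : RecIn O f → RecIn O g → RecIn O fun n => Nat.pair <$> f n <*> g n
  | comp {f g} : RecIn O f → RecIn O g → RecIn O fun n => g n >>= f
  | prec {f g} : RecIn O f → RecIn O g → RecIn O (Nat.unpaired fun a n =>
      n.rec (f a) fun y IH => do let i ← IH; g (Nat.pair a (Nat.pair y i)))
  | rfind {f} : RecIn O f → RecIn O fun a =>
      Nat.rfind fun n => (fun m => m = 0) <$> f (Nat.pair a n)

/-- Characteristic function of a set of naturals. -/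
noncomputable def chi (C : Set ℕ) : ℕ → ℕ := C.indicator fun _ => 1

/-- A (total) function `f : ℕ → ℕ` is Turing reducible to the set `C`. -/
noncomputable def FunRecIn (C : Set ℕ) (f : ℕ → ℕ) : Prop := RecIn (chi C) f

/-- A set `A` is Turing reducible to the set `C`. -/
noncomputable def SetRecIn (C A : Set ℕ) : Prop := FunRecIn C (chi A)

/-- Turing join of two sets. -/
def join (A B : Set ℕ) : Set ℕ :=
  {n | (∃ k ∈ A, n = 2 * k) ∨ (∃ k ∈ B, n = 2 * k + 1)}

/-- A bifamily: a collection of pairs of finite sets closed downward under the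
product subset relation. -/
def Bifamily (H : Set (Finset ℕ × Finset ℕ)) : Prop :=
  ∀ C D E F : Finset ℕ, (C, D) ∈ H → E ⊆ C → F ⊆ D → (E, F) ∈ H

/-- The pair of maps `(E, F)` forms a biarray. -/
def IsBiarray (E : ℕ → Finset ℕ) (F : ℕ → ℕ → Finset ℕ) : Prop :=
  (∀ n x, x ∈ E n → n < x) ∧ (∀ n m x, x ∈ F n m → m < x)

/-- The biarray `(E, F)` is Turing reducible to `C` (via canonical indices of finite sets). -/
noncomputable def BiarrayRecIn (C : Set ℕ) (E : ℕ → Finset ℕ) (F : ℕ → ℕ → Finset ℕ) : Prop :=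
  FunRecIn C (fun n => Encodable.encode (E n)) ∧
  FunRecIn C (fun p => Encodable.encode (F p.unpair.1 p.unpair.2))

/-- The biarray `(E, F)` meets the bifamily `H`. -/
def Meets (H : Set (Finset ℕ × Finset ℕ)) (E : ℕ → Finset ℕ) (F : ℕ → ℕ → Finset ℕ) : Prop :=
  ∃ n m, (E n, F n m) ∈ H

/-- The bifamily `H` is `C`-2-hyperimmune: every `C`-computable biarray meets `H`. -/
noncomputable def Is2HyperimmuneIn (C : Set ℕ) (H : Set (Finset ℕ × Finset ℕ)) : Prop :=
  ∀ E : ℕ → Finset ℕ, ∀ F : ℕ → ℕ → Finset ℕ,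
    IsBiarray E F → BiarrayRecIn C E F → Meets H E F

/-- The set `A` is `C`-hyperimmune. -/
noncomputable def HyperimmuneIn (C : Set ℕ) (A : Set ℕ) : Prop :=
  ∀ V : ℕ → Finset ℕ, (∀ n x, x ∈ V n → n < x) →
    FunRecIn C (fun n => Encodable.encode (V n)) →
    ∃ n, ∀ x ∈ V n, x ∉ A

/-- `G` is thin for the coloring `f` of `n`-element sets with `k` colors. -/
def Thin (n k : ℕ) (f : Finset ℕ → ℕ) (G : Set ℕ) : Prop :=
  ∃ i < k, ∀ σ : Finset ℕ, ↑σ ⊆ G → σ.card = n → f σ ≠ i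

/-- `G` is free for the coloring `f` of `n`-element sets. -/
def Free (n : ℕ) (f : Finset ℕ → ℕ) (G : Set ℕ) : Prop :=
  ∀ σ : Finset ℕ, ↑σ ⊆ G → σ.card = n → f σ ∈ G → f σ ∈ σ

/-- The coloring `f` (of finite sets) is Turing reducible to `C`,
via the canonical coding of finite sets. -/
noncomputable def ColorRecIn (C : Set ℕ) (f : Finset ℕ → ℕ) : Prop :=
  FunRecIn C (fun x => f (((Encodable.decode x : Option (Finset ℕ))).getD ∅))

/-- A coloring of pairs is stable if `lim_s f(x, s)` exists for every `x`. -/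
def StableColoring (f : Finset ℕ → ℕ) : Prop :=
  ∀ x, ∃ i, ∃ N, ∀ s, N ≤ s → f {x, s} = i

/-- `C_i(f)` : the set of `x` such that `f(x, s) = i` for all but finitely many `s`. -/
def Climit (f : Finset ℕ → ℕ) (i : ℕ) : Set ℕ :=
  {x | ∃ N, ∀ s, N ≤ s → f {x, s} = i}

/-- `T` is a tournament: irreflexive and exactly one of `T x y`, `T y x` for `x ≠ y`. -/
def Tournament (T : ℕ → ℕ → Prop) : Prop :=
  (∀ x, ¬ T x x) ∧ ∀ x y, x ≠ y → Xor' (T x y) (T y x)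

/-- `H` is `T`-transitive. -/
def TransitiveIn (T : ℕ → ℕ → Prop) (H : Set ℕ) : Prop :=
  ∀ x ∈ H, ∀ y ∈ H, ∀ z ∈ H, T x y → T y z → T x z

/-- A tournament is stable if every `x` beats, or is beaten by, all but finitely many `y`. -/
def StableTournament (T : ℕ → ℕ → Prop) : Prop :=
  ∀ x, {y | ¬ T x y}.Finite ∨ {y | ¬ T y x}.Finite

/-- Coding of a binary relation on `ℕ` as a set of naturals. -/
def codeRel (T : ℕ → ℕ → Prop) : Set ℕ := {n | T n.unpair.1 n.unpair.2}

/-- The relation `T` is Turing reducible to `C`. -/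
noncomputable def RelRecIn (C : Set ℕ) (T : ℕ → ℕ → Prop) : Prop :=
  FunRecIn C (chi (codeRel T))

/-- `A →_T B`. -/
def Arrow (T : ℕ → ℕ → Prop) (A B : Set ℕ) : Prop := ∀ x ∈ A, ∀ y ∈ B, T x y

/-- The tournament `T` diagonalizes against the pair `(A, B)`. -/
def DiagAgainst (T : ℕ → ℕ → Prop) (A B : Set ℕ) : Prop :=
  Arrow T A B ∧ {x | ¬ (Arrow T B {x} ∧ Arrow T {x} A)}.Finite

/-- The maps form a 4-array. -/
def Is4Array (E : ℕ → Finset ℕ) (E' : ℕ → ℕ → ℕ → Finset ℕ)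
    (F : ℕ → ℕ → Finset ℕ) (F' : ℕ → ℕ → ℕ → Finset ℕ) : Prop :=
  (∀ n x, x ∈ E n → n < x) ∧ (∀ n m l x, x ∈ E' n m l → m < x) ∧
  (∀ n m x, x ∈ F n m → n < x) ∧ (∀ n m l x, x ∈ F' n m l → l < x)

/-- The 4-array is Turing reducible to `C`. -/
noncomputable def FourArrayRecIn (C : Set ℕ) (E : ℕ → Finset ℕ) (E' : ℕ → ℕ → ℕ → Finset ℕ)
    (F : ℕ → ℕ → Finset ℕ) (F' : ℕ → ℕ → ℕ → Finset ℕ) : Prop :=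
  FunRecIn C (fun n => Encodable.encode (E n)) ∧
  FunRecIn C (fun p => Encodable.encode (E' p.unpair.1 p.unpair.2.unpair.1 p.unpair.2.unpair.2)) ∧
  FunRecIn C (fun p => Encodable.encode (F p.unpair.1 p.unpair.2)) ∧
  FunRecIn C (fun p => Encodable.encode (F' p.unpair.1 p.unpair.2.unpair.1 p.unpair.2.unpair.2))

/-- The pair of tournaments `(T₀, T₁)` is `C`-4-hyperimmune. -/
noncomputable def Is4HyperimmuneIn (C : Set ℕ) (T₀ T₁ : ℕ → ℕ → Prop) : Prop :=
  ∀ E : ℕ → Finset ℕ, ∀ E' : ℕ → ℕ → ℕ → Finset ℕ,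
  ∀ F : ℕ → ℕ → Finset ℕ, ∀ F' : ℕ → ℕ → ℕ → Finset ℕ,
    Is4Array E E' F F' → FourArrayRecIn C E E' F F' →
    ∃ n m l, DiagAgainst T₀ ↑(E n) ↑(E' n m l) ∧ DiagAgainst T₁ ↑(F n m) ↑(F' n m l)

/-- `A ⊆* B` : inclusion up to finitely many elements. -/
def SubsetStar (A B : Set ℕ) : Prop := (A \ B).Finite

/-- `G` is cohesive for the sequence `R`. -/
def Cohesive (R : ℕ → Set ℕ) (G : Set ℕ) : Prop :=
  G.Infinite ∧ ∀ i, SubsetStar G (R i) ∨ SubsetStar G (R i)ᶜ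

/-- Coding of a sequence of sets as a single set. -/
def codeSeq (R : ℕ → Set ℕ) : Set ℕ := {n | n.unpair.2 ∈ R n.unpair.1}

/-- Coding of a set of binary strings (e.g. a binary tree) as a set of naturals. -/
def codeTree (Tr : Set (List Bool)) : Set ℕ := {n | ∃ l ∈ Tr, Encodable.encode l = n}

/-- `Tr` is a binary tree: a set of binary strings closed under prefixes. -/
def IsTree (Tr : Set (List Bool)) : Prop := ∀ l ∈ Tr, ∀ l' : List Bool, l' <+: l → l' ∈ Tr

/-- `P` is an infinite path through `Tr`. -/
def IsPath (Tr : Set (List Bool)) (P : ℕ → Bool) : Prop :=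
  ∀ k, (List.ofFn fun i : Fin k => P i) ∈ Tr

/-- Coding of a coloring of finite sets as a set of naturals (its graph). -/
def codeColor (f : Finset ℕ → ℕ) : Set ℕ :=
  {n | ∃ σ : Finset ℕ, n = Nat.pair (Encodable.encode σ) (f σ)}

/-- `L` is a (strict) linear order on `ℕ`. -/
def LinearOrderRel (L : ℕ → ℕ → Prop) : Prop :=
  (∀ x, ¬ L x x) ∧ (∀ x y z, L x y → L y z → L x z) ∧ (∀ x y, x ≠ y → L x y ∨ L y x)

/-- `L` has order type `ω + ω*`. -/
def OmegaPlusOmegaStar (L : ℕ → ℕ → Prop) : Prop :=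
  ∃ A B : Set ℕ, (∀ x, x ∈ A ↔ x ∉ B) ∧
    (∀ a ∈ A, {y | L y a}.Finite) ∧ (∀ b ∈ B, {y | L b y}.Finite) ∧
    (∀ a ∈ A, ∀ b ∈ B, L a b)

/-- `S` is an ascending sequence for `L`. -/
def Ascending (L : ℕ → ℕ → Prop) (S : Set ℕ) : Prop :=
  ∀ x ∈ S, ∀ y ∈ S, x < y → L x y

/-- `S` is a descending sequence for `L`. -/
def Descending (L : ℕ → ℕ → Prop) (S : Set ℕ) : Prop :=
  ∀ x ∈ S, ∀ y ∈ S, x < y → L y x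

/-!
Every element of a finite set of naturals is at most its canonical code. Hence if the codes of a
`C ⊕ G`-computable biarray `(E, F)` are dominated by `C`-computable `g₁, g₂`, then `E n ⊆ (n, g₁ n]`
and `F n m ⊆ (m, g₂ ⟨n, m⟩]`. These intervals form a `C`-computable biarray, which meets `H`;
since `H` is closed downward, `(E, F)` meets `H` as well.
-/

open Encodable

theorem _root_.List.le_encode_of_mem {l : List ℕ} {x : ℕ} (h : x ∈ l) : x ≤ encode l := by
  induction h with
  | head => exact (Nat.left_le_pair _ _).trans (Nat.le_succ _)
  | tail _ _ ih => exact ih.trans ((Nat.right_le_pair _ _).trans (Nat.le_succ _))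

theorem _root_.Finset.le_encode_of_mem {s : Finset ℕ} {x : ℕ} (h : x ∈ s) : x ≤ encode s :=
  List.le_encode_of_mem ((Finset.mem_sort (· ≤ ·)).2 h)

theorem _root_.Finset.subset_Ioc_of_encode_le {s : Finset ℕ} {a b : ℕ} (hs : ∀ x ∈ s, a < x)
    (hb : encode s ≤ b) : s ⊆ Finset.Ioc a b :=
  fun x hx => Finset.mem_Ioc.2 ⟨hs x hx, (Finset.le_encode_of_mem hx).trans hb⟩

theorem _root_.Nat.sort_Ioc (a b : ℕ) :
    (Finset.Ioc a b).sort (· ≤ ·) = List.range' (a + 1) (b - a) :=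
  List.mergeSort_eq_self _ (List.pairwise_le_range' ..)

theorem _root_.Primrec.encode_Ioc : Primrec fun p : ℕ × ℕ => encode (Finset.Ioc p.1 p.2) := by
  have hlist : Primrec fun p : ℕ × ℕ => (List.range (p.2 - p.1)).map (p.1 + 1 + ·) :=
    Primrec.list_map (Primrec.list_range.comp (Primrec.nat_sub.comp Primrec.snd Primrec.fst))
      (Primrec.nat_add.comp₂ (Primrec.succ.comp (Primrec.fst.comp Primrec.fst)) Primrec₂.right)
  refine (Primrec.encode.comp hlist).of_eq fun p => ?_
  -- a finset of naturals is encoded as its sorted list of elements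
  show encode _ = encode ((Finset.Ioc p.1 p.2).sort (· ≤ ·))
  rw [Nat.sort_Ioc, List.range'_eq_map_range]

theorem RecIn.of_partrec {O f : ℕ →. ℕ} (h : Nat.Partrec f) : RecIn O f := by
  induction h with
  | zero => exact .zero
  | succ => exact .succ
  | left => exact .left
  | right => exact .right
  | pair _ _ ih₁ ih₂ => exact .pair ih₁ ih₂
  | comp _ _ ih₁ ih₂ => exact .comp ih₁ ih₂
  | prec _ _ ih₁ ih₂ => exact .prec ih₁ ih₂
  | rfind _ ih => exact .rfind ih

section FunRecIn

variable {C : Set ℕ}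

theorem FunRecIn.of_primrec {f : ℕ → ℕ} (hf : Primrec f) : FunRecIn C f :=
  RecIn.of_partrec (Nat.Partrec.of_primrec (Primrec.nat_iff.1 hf))

theorem FunRecIn.comp₂ {h : ℕ → ℕ → ℕ} {f g : ℕ → ℕ} (hh : Primrec₂ h) (hf : FunRecIn C f)
    (hg : FunRecIn C g) : FunRecIn C fun n => h (f n) (g n) := by
  have hh' : FunRecIn C fun p => h p.unpair.1 p.unpair.2 :=
    .of_primrec (hh.comp (Primrec.fst.comp Primrec.unpair) (Primrec.snd.comp Primrec.unpair))
  have hcomp := RecIn.comp hh' (RecIn.pair hf hg)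
  refine (congrArg (RecIn (chi C)) (funext fun n => ?_)).mp hcomp
  simp only [Seq.seq, PFun.coe_val, Part.map_eq_map, Part.map_some, Part.bind_some]
  show (Part.some _).bind (fun p : ℕ => Part.some (h p.unpair.1 p.unpair.2)) = _
  rw [Part.bind_some, Nat.unpair_pair]

end FunRecIn

section Biarray

variable {C : Set ℕ} {H : Set (Finset ℕ × Finset ℕ)}

theorem isBiarray_Ioc (g₁ g₂ : ℕ → ℕ) :
    IsBiarray (fun n => Finset.Ioc n (g₁ n)) (fun n m => Finset.Ioc m (g₂ (Nat.pair n m))) :=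
  ⟨fun _ _ hx => (Finset.mem_Ioc.1 hx).1, fun _ _ _ hx => (Finset.mem_Ioc.1 hx).1⟩

theorem biarrayRecIn_Ioc {g₁ g₂ : ℕ → ℕ} (hg₁ : FunRecIn C g₁) (hg₂ : FunRecIn C g₂) :
    BiarrayRecIn C (fun n => Finset.Ioc n (g₁ n)) (fun n m => Finset.Ioc m (g₂ (Nat.pair n m))) := by
  refine ⟨.comp₂ Primrec.encode_Ioc.to₂ (.of_primrec .id) hg₁, ?_⟩
  simpa only [Nat.pair_unpair] using
    FunRecIn.comp₂ Primrec.encode_Ioc.to₂ (.of_primrec (Primrec.snd.comp .unpair)) hg₂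

theorem Bifamily.meets_of_subset (hH : Bifamily H) {E E' : ℕ → Finset ℕ}
    {F F' : ℕ → ℕ → Finset ℕ} (h : Meets H E' F') (hE : ∀ n, E n ⊆ E' n)
    (hF : ∀ n m, F n m ⊆ F' n m) : Meets H E F :=
  let ⟨n, m, hnm⟩ := h
  ⟨n, m, hH _ _ _ _ hnm (hE n) (hF n m)⟩

theorem Is2HyperimmuneIn.meets_of_encode_le (h2 : Is2HyperimmuneIn C H) (hH : Bifamily H)
    {E : ℕ → Finset ℕ} {F : ℕ → ℕ → Finset ℕ} (hEF : IsBiarray E F) {g₁ g₂ : ℕ → ℕ}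
    (hg₁ : FunRecIn C g₁) (hg₂ : FunRecIn C g₂) (hE : ∀ n, encode (E n) ≤ g₁ n)
    (hF : ∀ n m, encode (F n m) ≤ g₂ (Nat.pair n m)) : Meets H E F :=
  hH.meets_of_subset (h2 _ _ (isBiarray_Ioc g₁ g₂) (biarrayRecIn_Ioc hg₁ hg₂))
    (fun n => (E n).subset_Ioc_of_encode_le (hEF.1 n) (hE n))
    (fun n m => (F n m).subset_Ioc_of_encode_le (hEF.2 n m) (hF n m))

end Biarray

theorem two_hyperimmune_of_hyperimmune_free (C : Set ℕ) (H : Set (Finset ℕ × Finset ℕ))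
    (hH : Bifamily H) (h2 : Is2HyperimmuneIn C H) (G : Set ℕ)
    (hGfree : ∀ f : ℕ → ℕ, FunRecIn (join C G) f →
      ∃ g : ℕ → ℕ, FunRecIn C g ∧ ∀ n, f n ≤ g n) :
    Is2HyperimmuneIn (join C G) H := by
  rintro E F hEF ⟨hE, hF⟩
  obtain ⟨g₁, hg₁, hE_le⟩ := hGfree _ hE
  obtain ⟨g₂, hg₂, hF_le⟩ := hGfree _ hF
  refine h2.meets_of_encode_le hH hEF hg₁ hg₂ hE_le fun n m => ?_
  simpa only [Nat.unpair_pair] using hF_le (Nat.pair n m)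

end Paper
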